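/- For any k-by-n binary matrix P with output random variable X of the constant-action X-program (P, θ), and any s ∈ F_2^n: 2·P(X·sᵀ=0) − 1 = Σ_{w=0}^{n_s} cos(2θ(n_s − 2w))·P(wt(c) = w | c ~ C_s uniform), where C_s and n_s are as usual. -/

import Mathlib

/-- Hamming weight of a binary vector: number of coordinates equal to 1. -/
def wt {ι : Type*} [Fintype ι] (a : ι → ZMod 2) : ℕ :=
  (Finset.univ.filter fun i => a i = 1).card

/-- Output distribution of the constant-action X-program given by the k-by-n binary
matrix `P` with action `θ`: `P(X = x)`. -/
noncomputable def XProb {k n : ℕ} (P : Matrix (Fin k) (Fin n) (ZMod 2)) (θ : ℝ)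
    (x : Fin n → ZMod 2) : ℝ :=
  ‖∑ a ∈ Finset.univ.filter (fun a : Fin k → ZMod 2 => Matrix.vecMul a P = x),
    (Real.cos θ : ℂ) ^ (k - wt a) * (Complex.I * Real.sin θ) ^ (wt a)‖ ^ 2

/-- The bias of the X-program output distribution in direction `s`:
`P(X ⬝ sᵀ = 0)`, the probability that the output is orthogonal to `s` over `F₂`. -/
noncomputable def bias {k n : ℕ} (P : Matrix (Fin k) (Fin n) (ZMod 2)) (θ : ℝ)
    (s : Fin n → ZMod 2) : ℝ :=
  ∑ x ∈ Finset.univ.filter (fun x : Fin n → ZMod 2 => dotProduct x s = 0), XProb P θ x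

/-- The code `C_s`: the column span of the submatrix `P_s` of `P` consisting of the rows
not orthogonal to `s`. -/
def Cs {k n : ℕ} (P : Matrix (Fin k) (Fin n) (ZMod 2)) (s : Fin n → ZMod 2) :
    Finset ({i : Fin k // dotProduct (P i) s = 1} → ZMod 2) :=
  Finset.image (fun d : Fin n → ZMod 2 => fun i => dotProduct (P i.1) d) Finset.univ


/-!
Write the amplitude of the output as `A(x) = ∑_{aP = x} ∏_j g(a_j)` with `g(0) = cos θ`,
`g(1) = i sin θ`. Its Walsh transform factorises over the rows `p_j` of `P`:
`Â(y) = ∏_j (cos θ + (-1)^{p_j⬝y} i sin θ) = exp(iθ ∑_j (-1)^{p_j⬝y})`. By Parseval,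
`2 P(X⬝s = 0) - 1 = ∑_x (-1)^{x⬝s} |A(x)|²` is the average over `y` of
`Re Â(s + y) conj (Â y) = cos(θ ∑_j ((-1)^{p_j⬝s} - 1) (-1)^{p_j⬝y})`, where only the rows with
`p_j⬝s = 1` survive, leaving `cos(2θ(n_s - 2 wt(P_s y)))`. Finally `y ↦ P_s y` is linear, so it
pushes the uniform distribution on `F₂ⁿ` forward to the uniform distribution on `C_s`.
-/

open Finset Matrix
open scoped ComplexConjugate

lemma ZMod.eq_zero_or_eq_one_of_two (z : ZMod 2) : z = 0 ∨ z = 1 := by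
  decide +revert

lemma AddChar.map_sum_eq_prod {A M α : Type*} [AddCommMonoid A] [CommMonoid M] (ψ : AddChar A M)
    (s : Finset α) (f : α → A) : ψ (∑ i ∈ s, f i) = ∏ i ∈ s, ψ (f i) := by
  classical
  induction s using Finset.induction_on with
  | empty => simp
  | insert a s ha ih => rw [sum_insert ha, AddChar.map_add_eq_mul, ih, prod_insert ha]

lemma ZMod.sum_univ_two {M : Type*} [AddCommMonoid M] (f : ZMod 2 → M) : ∑ v, f v = f 0 + f 1 :=
  Fin.sum_univ_two f

noncomputable def signChar : AddChar (ZMod 2) ℝ :=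
  AddChar.zmodChar 2 (by norm_num : (-1 : ℝ) ^ 2 = 1)

@[simp] lemma signChar_zero : signChar 0 = 1 := AddChar.map_zero_eq_one _

@[simp] lemma signChar_one : signChar 1 = -1 := by
  simp [signChar, AddChar.zmodChar_apply, ZMod.val_one]

lemma signChar_eq_one_sub_two_mul_ite (z : ZMod 2) :
    signChar z = 1 - 2 * if z = 1 then 1 else 0 := by
  rcases z.eq_zero_or_eq_one_of_two with rfl | rfl <;> norm_num

lemma sum_signChar_dotProduct {ι : Type*} [Fintype ι] [DecidableEq ι] (u : ι → ZMod 2) :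
    ∑ y, signChar (u ⬝ᵥ y) = if u = 0 then (2 : ℝ) ^ Fintype.card ι else 0 := by
  let ψ : AddChar (ι → ZMod 2) ℝ :=
    signChar.compAddMonoidHom (AddMonoidHom.mk' (u ⬝ᵥ ·) (dotProduct_add u))
  have hψ : ψ = 0 ↔ u = 0 := by
    refine ⟨fun h => ?_, fun h => ?_⟩
    · by_contra hu
      obtain ⟨j, hj⟩ := Function.ne_iff.mp hu
      have := DFunLike.congr_fun h (Pi.single j 1)
      norm_num [ψ, (u j).eq_zero_or_eq_one_of_two.resolve_left hj] at this
    · ext y; simp [ψ, h]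
  simpa [ψ, hψ] using ψ.sum_eq_ite

section Weight

variable {ι : Type*} [Fintype ι]

lemma wt_le_card (c : ι → ZMod 2) : wt c ≤ Fintype.card ι :=
  card_filter_le _ _

lemma prod_ite_eq_pow_sub_wt_mul_pow_wt {M : Type*} [CommMonoid M] (a : ι → ZMod 2) (x y : M) :
    ∏ j, (if a j = 1 then x else y) = y ^ (Fintype.card ι - wt a) * x ^ wt a := by
  have hcard : #{j | ¬a j = 1} = Fintype.card ι - wt a := by
    have := card_filter_add_card_filter_not (s := univ) (fun j => a j = 1)
    rw [card_univ] at this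
    unfold wt
    omega
  rw [prod_ite, prod_const, prod_const, hcard, mul_comm]
  rfl

lemma sum_signChar_eq_card_sub_two_mul_wt (c : ι → ZMod 2) :
    ∑ i, signChar (c i) = Fintype.card ι - 2 * (wt c : ℝ) := by
  simp only [signChar_eq_one_sub_two_mul_ite, sum_sub_distrib, ← mul_sum, sum_boole]
  simp [wt]

lemma sum_signChar_sub_one_mul (u : ι → ZMod 2) (r : ι → ℝ) :
    ∑ j, (signChar (u j) - 1) * r j = -2 * ∑ i : {j // u j = 1}, r i := by
  have hterm : ∀ j, (signChar (u j) - 1) * r j = -2 * if u j = 1 then r j else 0 := by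
    intro j
    rcases (u j).eq_zero_or_eq_one_of_two with h | h <;> norm_num [h]
  simp_rw [hterm, ← mul_sum, ← sum_filter]
  rw [sum_subtype _ (p := fun j => u j = 1) (by simp)]

end Weight

section Walsh

variable {ι : Type*} [Fintype ι] [DecidableEq ι]

noncomputable def walsh (f : (ι → ZMod 2) → ℂ) (y : ι → ZMod 2) : ℂ :=
  ∑ x, (signChar (x ⬝ᵥ y) : ℂ) * f x

lemma walsh_sum_fiber {α : Type*} [Fintype α] (g : α → ι → ZMod 2) (F : α → ℂ)
    (y : ι → ZMod 2) :
    walsh (fun x => ∑ a with g a = x, F a) y = ∑ a, (signChar (g a ⬝ᵥ y) : ℂ) * F a := by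
  rw [walsh, ← sum_fiberwise univ g]
  refine sum_congr rfl fun x _ => ?_
  rw [mul_sum]
  exact sum_congr rfl fun a ha => by rw [(mem_filter.mp ha).2]

lemma sum_signChar_dotProduct_mul_prod (t : ι → ZMod 2) (h : ι → ZMod 2 → ℂ) :
    ∑ a, (signChar (a ⬝ᵥ t) : ℂ) * ∏ j, h j (a j) = ∏ j, (h j 0 + signChar (t j) * h j 1) := by
  have hsplit : ∀ j, h j 0 + signChar (t j) * h j 1 = ∑ v, (signChar (v * t j) : ℂ) * h j v := by
    intro j
    simp [ZMod.sum_univ_two]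
  simp_rw [hsplit, Fintype.prod_sum, dotProduct, AddChar.map_sum_eq_prod, Complex.ofReal_prod,
    ← prod_mul_distrib]

lemma sum_signChar_dotProduct_mul (x x' : ι → ZMod 2) :
    ∑ y, signChar (x ⬝ᵥ y) * signChar (x' ⬝ᵥ y)
      = if x = x' then (2 : ℝ) ^ Fintype.card ι else 0 := by
  have h : ∀ y, signChar (x ⬝ᵥ y) * signChar (x' ⬝ᵥ y) = signChar ((x - x') ⬝ᵥ y) := by
    intro y
    rw [sub_dotProduct, sub_eq_add_neg, ZMod.neg_eq_self_mod_two, AddChar.map_add_eq_mul]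
  simp_rw [h, sum_signChar_dotProduct, sub_eq_zero]

lemma sum_signChar_mul_norm_sq (f : (ι → ZMod 2) → ℂ) (s : ι → ZMod 2) :
    ∑ x, signChar (x ⬝ᵥ s) * ‖f x‖ ^ 2
      = ((2 : ℝ) ^ Fintype.card ι)⁻¹ * ∑ y, (walsh f (s + y) * conj (walsh f y)).re := by
  have key : ∑ y, walsh f (s + y) * conj (walsh f y)
      = ((2 : ℝ) ^ Fintype.card ι * ∑ x, signChar (x ⬝ᵥ s) * ‖f x‖ ^ 2 : ℝ) := calc
    _ = ∑ x, ∑ x', (signChar (x ⬝ᵥ s) * f x * conj (f x')) *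
          ((∑ y, signChar (x ⬝ᵥ y) * signChar (x' ⬝ᵥ y) : ℝ) : ℂ) := by
      simp only [walsh, map_sum, map_mul, Complex.conj_ofReal, sum_mul_sum]
      simp only [mul_sum, Complex.ofReal_sum]
      rw [sum_comm]
      refine sum_congr rfl fun x _ => ?_
      rw [sum_comm]
      refine sum_congr rfl fun x' _ => sum_congr rfl fun y _ => ?_
      rw [dotProduct_add, AddChar.map_add_eq_mul]
      push_cast
      ring
    _ = _ := by
      simp_rw [sum_signChar_dotProduct_mul, apply_ite Complex.ofReal, Complex.ofReal_zero,
        mul_ite, mul_zero, sum_ite_eq]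
      simp only [mem_univ, if_true, Complex.ofReal_mul, Complex.ofReal_sum, mul_sum]
      refine sum_congr rfl fun x _ => ?_
      rw [mul_assoc _ (f x), Complex.mul_conj, Complex.normSq_eq_norm_sq]
      push_cast
      ring
  rw [← Complex.re_sum, key, Complex.ofReal_re, inv_mul_cancel_left₀ (by positivity)]

end Walsh

lemma cos_add_signChar_mul_I_sin (θ : ℝ) (z : ZMod 2) :
    (Real.cos θ : ℂ) + signChar z * (Complex.I * Real.sin θ)
      = Complex.exp ((θ * signChar z : ℝ) * Complex.I) := by
  rw [Complex.exp_mul_I]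
  rcases z.eq_zero_or_eq_one_of_two with rfl | rfl <;> simp [mul_comm]

lemma re_exp_mul_I_mul_conj_exp_mul_I (a b : ℝ) :
    (Complex.exp (a * Complex.I) * conj (Complex.exp (b * Complex.I))).re = Real.cos (a - b) := by
  simp [Complex.mul_re, Complex.exp_ofReal_mul_I_re, Complex.exp_ofReal_mul_I_im, Real.cos_sub]

/-- The submatrix `P_s` of the rows of `P` not orthogonal to `s`. -/
def nonOrthRows {κ ι : Type*} [Fintype ι] (P : Matrix κ ι (ZMod 2)) (s : ι → ZMod 2) :
    Matrix {i // P i ⬝ᵥ s = 1} ι (ZMod 2) :=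
  P.submatrix Subtype.val id

lemma sum_signChar_sub_sum_signChar {κ ι : Type*} [Fintype κ] [Fintype ι]
    (P : Matrix κ ι (ZMod 2)) (s y : ι → ZMod 2) :
    ∑ j, signChar ((P *ᵥ (s + y)) j) - ∑ j, signChar ((P *ᵥ y) j)
      = -2 * ∑ i, signChar ((nonOrthRows P s *ᵥ y) i) := by
  calc
    _ = ∑ j, (signChar ((P *ᵥ s) j) - 1) * signChar ((P *ᵥ y) j) := by
      rw [← sum_sub_distrib]
      refine sum_congr rfl fun j _ => ?_
      rw [mulVec_add, Pi.add_apply, AddChar.map_add_eq_mul]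
      ring
    _ = _ := sum_signChar_sub_one_mul _ _

section XProgram

variable {k n : ℕ} (P : Matrix (Fin k) (Fin n) (ZMod 2)) (θ : ℝ)

noncomputable def amplitude (x : Fin n → ZMod 2) : ℂ :=
  ∑ a with a ᵥ* P = x, ∏ j, if a j = 1 then Complex.I * Real.sin θ else (Real.cos θ : ℂ)

lemma XProb_eq_norm_amplitude_sq (x : Fin n → ZMod 2) :
    XProb P θ x = ‖amplitude P θ x‖ ^ 2 := by
  simp_rw [XProb, amplitude, prod_ite_eq_pow_sub_wt_mul_pow_wt, Fintype.card_fin]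

lemma walsh_amplitude (y : Fin n → ZMod 2) :
    walsh (amplitude P θ) y = Complex.exp ((θ * ∑ j, signChar ((P *ᵥ y) j) : ℝ) * Complex.I) := by
  unfold amplitude
  rw [walsh_sum_fiber]
  simp_rw [← Matrix.dotProduct_mulVec]
  rw [sum_signChar_dotProduct_mul_prod (P *ᵥ y)
    fun _ v => if v = 1 then Complex.I * Real.sin θ else (Real.cos θ : ℂ)]
  simp only [if_true, if_neg zero_ne_one, cos_add_signChar_mul_I_sin,
    ← Complex.exp_sum, Complex.ofReal_mul, Complex.ofReal_sum, mul_sum, sum_mul]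

lemma sum_signChar_mul_XProb (s : Fin n → ZMod 2) :
    ∑ x, signChar (x ⬝ᵥ s) * XProb P θ x
      = ((2 : ℝ) ^ n)⁻¹ * ∑ y, Real.cos (2 * θ * ∑ i, signChar ((nonOrthRows P s *ᵥ y) i)) := by
  simp_rw [XProb_eq_norm_amplitude_sq, sum_signChar_mul_norm_sq, walsh_amplitude,
    re_exp_mul_I_mul_conj_exp_mul_I, ← mul_sub, sum_signChar_sub_sum_signChar, Fintype.card_fin]
  congr 1
  refine sum_congr rfl fun y _ => ?_
  rw [← Real.cos_neg]
  ring_nf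

lemma two_mul_bias_sub_one (s : Fin n → ZMod 2) :
    2 * bias P θ s - 1 = ∑ x, signChar (x ⬝ᵥ s) * XProb P θ x := by
  have htotal : ∑ x, XProb P θ x = 1 := by
    have : IsEmpty {i // P i ⬝ᵥ 0 = 1} := ⟨fun i => by simpa using i.2⟩
    simpa using sum_signChar_mul_XProb P θ 0
  rw [bias, sum_filter, mul_sum, ← htotal, ← sum_sub_distrib]
  refine sum_congr rfl fun x _ => ?_
  rcases (x ⬝ᵥ s).eq_zero_or_eq_one_of_two with h | h <;>
    simp only [h, signChar_zero, signChar_one, if_pos, if_neg one_ne_zero] <;> ring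

end XProgram

lemma inv_card_mul_sum_comp_addMonoidHom {G H K : Type*} [AddGroup G] [Fintype G] [AddMonoid H]
    [DecidableEq H] [Field K] [CharZero K] (φ : G →+ H) (F : H → K) :
    (Fintype.card G : K)⁻¹ * ∑ g, F (φ g) = (#(univ.image φ) : K)⁻¹ * ∑ h ∈ univ.image φ, F h := by
  set m := #{g | φ g = 0}
  have hfiber : ∀ h ∈ univ.image φ, #{g | φ g = h} = m := fun h hh =>
    AddMonoidHom.card_fiber_eq_of_mem_range φ (by simpa using hh) ⟨0, map_zero φ⟩
  have hmaps : ∀ g ∈ univ, φ g ∈ univ.image φ := fun g _ => mem_image_of_mem φ (mem_univ g)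
  have hsum : ∑ g, F (φ g) = m * ∑ h ∈ univ.image φ, F h := by
    rw [← sum_fiberwise_of_maps_to' hmaps, mul_sum]
    refine sum_congr rfl fun h hh => ?_
    rw [sum_const, hfiber h hh, nsmul_eq_mul]
  have hcard : Fintype.card G = #(univ.image φ) * m := by
    rw [← card_univ, card_eq_sum_card_fiberwise hmaps, sum_congr rfl hfiber, sum_const, smul_eq_mul]
  have hm : (m : K) ≠ 0 := Nat.cast_ne_zero.mpr (card_pos.mpr ⟨0, by simp⟩).ne'
  rw [hsum, hcard]
  push_cast
  field_simp

lemma sum_comp_wt {ι M : Type*} [Fintype ι] [AddCommMonoid M] (C : Finset (ι → ZMod 2))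
    (F : ℕ → M) :
    ∑ c ∈ C, F (wt c) = ∑ w ∈ range (Fintype.card ι + 1), #{c ∈ C | wt c = w} • F w := by
  rw [← sum_fiberwise_of_maps_to' fun c _ => mem_range_succ_iff.mpr (wt_le_card c)]
  simp_rw [sum_const]

theorem two_bias_sub_one_eq_weight_dist {k n : ℕ} (P : Matrix (Fin k) (Fin n) (ZMod 2))
    (θ : ℝ) (s : Fin n → ZMod 2) :
    2 * bias P θ s - 1 =
      ∑ w ∈ Finset.range (Fintype.card {i : Fin k // dotProduct (P i) s = 1} + 1),
        Real.cos (2 * θ * ((Fintype.card {i : Fin k // dotProduct (P i) s = 1} : ℝ)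
            - 2 * (w : ℝ))) *
          (((Cs P s).filter (fun c => wt c = w)).card / ((Cs P s).card : ℝ)) := by
  set φ := (nonOrthRows P s).mulVecLin.toAddMonoidHom
  set F := fun w : ℕ =>
    Real.cos (2 * θ * ((Fintype.card {i : Fin k // P i ⬝ᵥ s = 1} : ℝ) - 2 * (w : ℝ)))
  have hCs : Cs P s = univ.image φ := rfl
  calc
    _ = ((2 : ℝ) ^ n)⁻¹ * ∑ y, Real.cos (2 * θ * ∑ i, signChar ((nonOrthRows P s *ᵥ y) i)) := by
      rw [two_mul_bias_sub_one, sum_signChar_mul_XProb]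
    _ = (Fintype.card (Fin n → ZMod 2) : ℝ)⁻¹ * ∑ y, F (wt (φ y)) := by
      simp [F, φ, sum_signChar_eq_card_sub_two_mul_wt]
    _ = (#(Cs P s) : ℝ)⁻¹ * ∑ c ∈ Cs P s, F (wt c) := by
      rw [hCs]
      exact inv_card_mul_sum_comp_addMonoidHom φ (F ∘ wt)
    _ = _ := by
      rw [sum_comp_wt _ F, mul_sum]
      refine sum_congr rfl fun w _ => ?_
      rw [nsmul_eq_mul]
      ring
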